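/- arXiv:0907.0241 — 4 statements merged into one kernel-verified Lean document; each statement's English description precedes it below -/
import Mathlib

section
/- With the setup described in the context, fix x ∈ X and for each i = 1, …, N define ρ_i = inf{‖x − w‖ : w ∈ D, φ(w) ≥ m_i} (with ρ_i = ∞ if no such w exists). If 1 ≤ i < N, ρ_i is finite and ρ_i > 0, then ρ_{i+1} ≥ ρ_i + ε₁. -/
open Set
open scoped ENNReal

lemma find_interval (N : ℕ) (ε₁ : ℝ) (hε₁ : 0 < ε₁) (hNε₁ : (N : ℝ) * ε₁ = 1 / 4)
    (a b : ℕ → ℝ)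
    (ha : ∀ i : ℕ, a i = 1 / 2 + ((i : ℝ) - 1) * ε₁)
    (hb : ∀ i : ℕ, b i = a i + ε₁)
    (y : ℝ) (k : ℕ) (hy34 : y ≤ 3 / 4) (hy : a k < y) (hk1 : 1 ≤ k) (hkN : k ≤ N) :
    ∃ j : ℕ, k ≤ j ∧ 1 ≤ j ∧ j ≤ N ∧ y ∈ Set.Ioc (a j) (b j) := by
  set c : ℝ := (y - 1 / 2) / ε₁ with hc
  have hak : a k = 1 / 2 + ((k : ℝ) - 1) * ε₁ := ha k
  have hck : (k : ℝ) - 1 < c := by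
    rw [hc, lt_div_iff₀ hε₁]; linarith [hy, hak ▸ hy]
  have hkj : k ≤ ⌈c⌉₊ := by
    have h1 : (k - 1 : ℕ) < ⌈c⌉₊ := by
      apply Nat.lt_ceil.mpr
      have : ((k - 1 : ℕ) : ℝ) = (k : ℝ) - 1 := by
        push_cast [Nat.cast_sub hk1]; ring
      rw [this]; exact hck
    omega
  have hcN : c ≤ (N : ℝ) := by
    rw [hc, div_le_iff₀ hε₁]; linarith
  have hjN : ⌈c⌉₊ ≤ N := Nat.ceil_le.mpr hcN
  have hj1 : 1 ≤ ⌈c⌉₊ := le_trans hk1 hkj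
  refine ⟨⌈c⌉₊, hkj, hj1, hjN, ?_, ?_⟩
  · -- a ⌈c⌉₊ < y
    have h1 : (⌈c⌉₊ - 1 : ℕ) < ⌈c⌉₊ := by omega
    have h2 : ((⌈c⌉₊ - 1 : ℕ) : ℝ) < c := Nat.lt_ceil.mp h1
    have h3 : ((⌈c⌉₊ - 1 : ℕ) : ℝ) = (⌈c⌉₊ : ℝ) - 1 := by
      push_cast [Nat.cast_sub hj1]; ring
    rw [ha]
    rw [h3, hc, lt_div_iff₀ hε₁] at h2
    linarith
  · -- y ≤ b ⌈c⌉₊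
    have h2 : c ≤ (⌈c⌉₊ : ℝ) := Nat.le_ceil c
    rw [hc, div_le_iff₀ hε₁] at h2
    rw [hb, ha]
    linarith

/-- **Fact (in the proof of Lemma 1).** With `ρ i = inf {‖x - w‖ : w ∈ D, φ w ≥ m i}`
(`∞` if there is no such `w`): if `1 ≤ i < N` and `ρ i` is finite and positive, then
`ρ (i+1) ≥ ρ i + ε₁`. -/
theorem rho_gap
    (X : Type*) [NormedAddCommGroup X] [NormedSpace ℝ X] [CompleteSpace X]
    (f : X → ℝ) (hf_lip : ∀ x y : X, |f x - f y| ≤ ‖x - y‖)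
    (hf_range : ∀ x : X, f x ∈ Set.Ioc (1 / 2 : ℝ) (3 / 4))
    (D : Set X) (hD : Dense D)
    (N : ℕ) (ε₁ : ℝ) (hε₁ : 0 < ε₁) (hNε₁ : (N : ℝ) * ε₁ = 1 / 4)
    -- the endpoints and midpoints of the intervals `I i = (a i, b i]`
    (a b m : ℕ → ℝ)
    (ha : ∀ i : ℕ, a i = 1 / 2 + ((i : ℝ) - 1) * ε₁)
    (hb : ∀ i : ℕ, b i = a i + ε₁)
    (hm : ∀ i : ℕ, m i = (a i + b i) / 2)
    -- the simple function `φ`: `φ x = m i` whenever `f x ∈ I i`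
    (φ : X → ℝ)
    (hφ : ∀ (x : X) (i : ℕ), 1 ≤ i → i ≤ N → f x ∈ Set.Ioc (a i) (b i) → φ x = m i)
    (x : X) (ρ : ℕ → ℝ≥0∞)
    (hρ : ∀ i : ℕ, ρ i = ⨅ (w : X) (_ : w ∈ D ∧ m i ≤ φ w), edist x w)
    (i : ℕ) (hi1 : 1 ≤ i) (hiN : i < N)
    (hfin : ρ i ≠ ⊤) (hpos : 0 < ρ i) :
    ρ i + ENNReal.ofReal ε₁ ≤ ρ (i + 1) := by
  have hm' : ∀ k : ℕ, m k = 1 / 2 + ((k : ℝ) - 1) * ε₁ + ε₁ / 2 := by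
    intro k; rw [hm, hb, ha]; ring
  have hmono : ∀ j k : ℕ, j ≤ k → m j ≤ m k := by
    intro j k hjk
    have hc : (j : ℝ) ≤ k := by exact_mod_cast hjk
    rw [hm', hm']; nlinarith
  have hmlt : ∀ j k : ℕ, m j ≤ m k → j ≤ k := by
    intro j k h
    by_contra hcn
    push_neg at hcn
    have hc : (k : ℝ) < j := by exact_mod_cast hcn
    rw [hm', hm'] at h; nlinarith
  have hamono : ∀ j k : ℕ, j ≤ k → a j ≤ a k := by
    intro j k hjk
    have hc : (j : ℝ) ≤ k := by exact_mod_cast hjk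
    rw [ha, ha]; nlinarith
  set R := (ρ i).toReal with hRdef
  have hρR : ρ i = ENNReal.ofReal R := (ENNReal.ofReal_toReal hfin).symm
  have hR0 : 0 < R := ENNReal.toReal_pos hpos.ne' hfin
  rw [hρ (i + 1)]
  refine le_iInf fun w => le_iInf fun hw => ?_
  obtain ⟨hwD, hwφ⟩ := hw
  by_contra hcon
  push_neg at hcon
  have hd : dist x w < R + ε₁ := by
    rw [edist_dist, hρR, ← ENNReal.ofReal_add hR0.le hε₁.le] at hcon
    exact (ENNReal.ofReal_lt_ofReal_iff_of_nonneg dist_nonneg).mp hcon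
  -- f w > a (i+1)
  have hN1 : 1 ≤ N := le_of_lt (lt_of_le_of_lt hi1 hiN)
  obtain ⟨j', hkj', hj'1, hj'N, hfw⟩ :=
    find_interval N ε₁ hε₁ hNε₁ a b ha hb (f w) 1 (hf_range w).2
      (by rw [ha]; push_cast; linarith [(hf_range w).1]) le_rfl hN1
  have hφw : φ w = m j' := hφ w j' hj'1 hj'N hfw
  have hij' : i + 1 ≤ j' := hmlt _ _ (by rw [← hφw]; exact hwφ)
  have hfw' : a (i + 1) < f w := lt_of_le_of_lt (hamono _ _ hij') hfw.1
  -- key: no u ∈ D within ε₁ of w and within R of x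
  have key : ∀ u : X, u ∈ D → dist u w < ε₁ → dist x u < R → False := by
    intro u hu h1 h2
    have hfu : a i < f u := by
      have h3 : |f u - f w| ≤ ‖u - w‖ := hf_lip u w
      rw [← dist_eq_norm] at h3
      have h4 : a (i + 1) = a i + ε₁ := by rw [ha, ha]; push_cast; ring
      have h5 := (abs_le.mp h3).1
      linarith
    obtain ⟨j, hij, hj1, hjN, hfuI⟩ :=
      find_interval N ε₁ hε₁ hNε₁ a b ha hb (f u) i (hf_range u).2 hfu hi1 (le_of_lt hiN)
    have hφu : φ u = m j := hφ u j hj1 hjN hfuI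
    have hle : ρ i ≤ edist x u := by
      rw [hρ i]
      exact iInf₂_le u ⟨hu, by rw [hφu]; exact hmono i j hij⟩
    rw [edist_dist, hρR] at hle
    have := (ENNReal.ofReal_le_ofReal_iff dist_nonneg).mp hle
    linarith
  set d := dist x w with hddef
  by_cases hd0 : d = 0
  · exact key w hwD (by rw [dist_self]; exact hε₁) (by rw [← hddef, hd0]; exact hR0)
  · have hdpos : 0 < d := lt_of_le_of_ne dist_nonneg (Ne.symm hd0)
    have hmaxR : max (d - ε₁) 0 < R := max_lt (by linarith) hR0
    set δ := min ((R - max (d - ε₁) 0) / 2) (min d ε₁ / 2) with hδdef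
    have hminpos : 0 < min d ε₁ := lt_min hdpos hε₁
    have hδpos : 0 < δ := lt_min (by linarith) (by linarith)
    have hδ1 : δ ≤ (R - max (d - ε₁) 0) / 2 := min_le_left _ _
    have hδ2 : δ ≤ min d ε₁ / 2 := min_le_right _ _
    set t : ℝ := (max (d - ε₁) 0 + δ) / d with htdef
    have hmax_eq : max (d - ε₁) 0 = d - min d ε₁ := by
      rcases le_total d ε₁ with h | h
      · rw [max_eq_right (by linarith), min_eq_left h]; ring
      · rw [max_eq_left (by linarith), min_eq_right h]
    have htd : t * d = max (d - ε₁) 0 + δ := by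
      rw [htdef]; field_simp
    have ht0 : 0 ≤ t := div_nonneg (by positivity) hdpos.le
    have ht1 : t ≤ 1 := by
      rw [htdef, div_le_one hdpos, hmax_eq]; linarith
    set v : X := x + t • (w - x) with hvdef
    have hxv : dist x v = t * d := by
      have h1 : x - v = (-t) • (w - x) := by rw [hvdef]; module
      rw [dist_eq_norm, h1, norm_smul, norm_neg, Real.norm_eq_abs, abs_of_nonneg ht0,
        ← dist_eq_norm, dist_comm]
    have hvw : dist v w = (1 - t) * d := by
      have h1 : v - w = (1 - t) • (x - w) := by rw [hvdef]; module
      rw [dist_eq_norm, h1, norm_smul, Real.norm_eq_abs, abs_of_nonneg (by linarith),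
        ← dist_eq_norm]
    have h1td : (1 - t) * d = min d ε₁ - δ := by
      have : (1 - t) * d = d - t * d := by ring
      rw [this, htd, hmax_eq]; ring
    have hxvR : dist x v < R := by rw [hxv, htd]; linarith
    have hvwε : dist v w < ε₁ := by
      rw [hvw, h1td]; have := min_le_right d ε₁; linarith
    obtain ⟨u, hu, hud⟩ := hD.exists_dist_lt v (lt_min (by linarith) (by linarith) :
      (0:ℝ) < min (ε₁ - dist v w) (R - dist x v))
    refine key u hu ?_ ?_
    · have h1 := min_le_left (ε₁ - dist v w) (R - dist x v)
      calc dist u w ≤ dist u v + dist v w := dist_triangle u v w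
        _ < (ε₁ - dist v w) + dist v w := by rw [dist_comm u v]; linarith
        _ = ε₁ := by ring
    · have h1 := min_le_right (ε₁ - dist v w) (R - dist x v)
      calc dist x u ≤ dist x v + dist v u := dist_triangle x v u
        _ < dist x v + (R - dist x v) := by linarith
        _ = R := by ring
end

section
/- Let X be a Banach space, p ∈ ℕ≥1 ∪ {∞}, and C ≥ 1. Assume that every 1-Lipschitz function g : X → [0, 10] admits a C^p smooth, C-Lipschitz function φ : X → ℝ with |g(x) − φ(x)| ≤ 1/8 for all x ∈ X. Then there exists a constant C₀ ≥ 1 such that every 1-Lipschitz function g : X → [0, 10] admits a C^p smooth, C₀-Lipschitz function h : X → [0, 10] with |g(x) − h(x)| ≤ 1/2 for all x ∈ X, h(x) = 0 whenever g(x) = 0, and h(x) = 10 whenever g(x) = 10. -/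
/-!
Compose the given `1/8`-approximation `φ` of `g` with a smooth, Lipschitz version of the clamp
`t ↦ max 0 (min t 10)` that is already `0` on `(-∞, 1/8]` and already `10` on `[10 - 1/8, ∞)`,
and that moves no point of `[-1/8, 10 + 1/8]` by more than `3/8`. Where `g = 0` we have
`φ ≤ 1/8`, and where `g = 10` we have `φ ≥ 10 - 1/8`, so the levels are preserved exactly.
-/

open Set Real
open scoped ContDiff

theorem ContDiff.exists_lipschitzWith_of_const_off_Icc {F : Type*} [NormedAddCommGroup F]
    [NormedSpace ℝ F] {f : ℝ → F} {n : WithTop ℕ∞} (hf : ContDiff ℝ n f) (hn : n ≠ 0)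
    {a b : ℝ} (hab : a ≤ b) (ha : ∀ t ≤ a, f t = f a) (hb : ∀ t, b ≤ t → f t = f b) :
    ∃ K, LipschitzWith K f := by
  obtain ⟨K, hK⟩ := hf.contDiffOn.exists_lipschitzOnWith hn (convex_Icc a b) isCompact_Icc
  have hproj : (Icc a b).domRestrict f ∘ projIcc a b hab = f := by
    funext t
    change f (projIcc a b hab t) = f t
    rcases le_total t a with hta | hat
    · rw [projIcc_of_le_left hab hta, ha t hta]
    rcases le_total b t with hbt | htb
    · rw [projIcc_of_right_le hab hbt, hb t hbt]
    · rw [projIcc_of_mem hab ⟨hat, htb⟩]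
  exact ⟨K * 1, hproj ▸ hK.to_restrict.comp (LipschitzWith.projIcc hab)⟩

noncomputable def ramp (δ t : ℝ) : ℝ :=
  smoothTransition ((t - δ) / (2 * δ))

section Ramp

variable {δ t : ℝ}

theorem ramp_of_le (hδ : 0 < δ) (ht : t ≤ δ) : ramp δ t = 0 :=
  smoothTransition.zero_of_nonpos (div_nonpos_of_nonpos_of_nonneg (by linarith) (by linarith))

theorem ramp_of_ge (hδ : 0 < δ) (ht : 3 * δ ≤ t) : ramp δ t = 1 :=
  smoothTransition.one_of_one_le ((one_le_div (by linarith)).2 (by linarith))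

theorem ramp_nonneg (δ t : ℝ) : 0 ≤ ramp δ t := smoothTransition.nonneg _

theorem ramp_le_one (δ t : ℝ) : ramp δ t ≤ 1 := smoothTransition.le_one _

theorem contDiff_ramp (δ : ℝ) : ContDiff ℝ ∞ (ramp δ) :=
  smoothTransition.contDiff.comp (by fun_prop)

end Ramp

/-- A smooth clamp to `[0, L]`: the convex combination, with weight `ramp δ (L - t)`, of the
cut-off identity `ramp δ t * t` and the top level `L`. -/
noncomputable def smoothClamp (L δ t : ℝ) : ℝ :=
  ramp δ (L - t) * (ramp δ t * t) + (1 - ramp δ (L - t)) * L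

section SmoothClamp

variable {L δ t : ℝ}

theorem contDiff_smoothClamp (L δ : ℝ) : ContDiff ℝ ∞ (smoothClamp L δ) := by
  have h₁ : ContDiff ℝ ∞ fun t => ramp δ (L - t) := (contDiff_ramp δ).comp (by fun_prop)
  exact (h₁.mul ((contDiff_ramp δ).mul contDiff_id)).add
    ((contDiff_const.sub h₁).mul contDiff_const)

theorem smoothClamp_of_le (hδ : 0 < δ) (hL : 4 * δ ≤ L) (ht : t ≤ δ) :
    smoothClamp L δ t = 0 := by
  simp [smoothClamp, ramp_of_le hδ ht, ramp_of_ge hδ (show 3 * δ ≤ L - t by linarith)]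

theorem smoothClamp_of_ge (hδ : 0 < δ) (ht : L - δ ≤ t) : smoothClamp L δ t = L := by
  simp [smoothClamp, ramp_of_le hδ (show L - t ≤ δ by linarith)]

theorem smoothClamp_mem_Icc (hδ : 0 < δ) (hL : 0 ≤ L) (t : ℝ) :
    smoothClamp L δ t ∈ Icc 0 L := by
  rcases le_total (L - δ) t with hLt | htL
  · simp [smoothClamp_of_ge hδ hLt, hL]
  have hcut : ramp δ t * t ∈ Icc 0 L := by
    rcases le_total t δ with htδ | hδt
    · simp [ramp_of_le hδ htδ, hL]
    · have hr₁ := ramp_le_one δ t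
      exact ⟨mul_nonneg (ramp_nonneg δ t) (by linarith), by nlinarith [ramp_nonneg δ t]⟩
  exact convex_Icc 0 L hcut ⟨hL, le_rfl⟩ (ramp_nonneg δ _)
    (by linarith [ramp_le_one δ (L - t)]) (by ring)

theorem abs_sub_smoothClamp_le (hδ : 0 < δ) (hL : 4 * δ ≤ L) (ht : t ∈ Icc (-δ) (L + δ)) :
    |t - smoothClamp L δ t| ≤ 3 * δ := by
  rcases le_total t δ with htδ | hδt
  · rw [smoothClamp_of_le hδ hL htδ, sub_zero, abs_le]
    constructor <;> linarith [ht.1]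
  rcases le_total (L - δ) t with hLt | htL
  · rw [smoothClamp_of_ge hδ hLt, abs_le]
    constructor <;> linarith [ht.2]
  have hr₀ := ramp_nonneg δ t
  have hr₁ := ramp_le_one δ t
  have hs₀ := ramp_nonneg δ (L - t)
  have hs₁ := ramp_le_one δ (L - t)
  -- Each of the two deviations is nonzero only within `3δ` of its end of `[0, L]`.
  have hlow : ramp δ (L - t) * ((1 - ramp δ t) * t) ∈ Icc 0 (3 * δ) := by
    rcases le_total (3 * δ) t with h3t | ht3
    · simp [ramp_of_ge hδ h3t, hδ.le]
    · have : (1 - ramp δ t) * t ∈ Icc 0 (3 * δ) := ⟨by nlinarith, by nlinarith⟩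
      exact ⟨by nlinarith [this.1], by nlinarith [this.1, this.2]⟩
  have hhigh : (1 - ramp δ (L - t)) * (L - t) ∈ Icc 0 (3 * δ) := by
    rcases le_total (3 * δ) (L - t) with h3t | ht3
    · simp [ramp_of_ge hδ h3t, hδ.le]
    · constructor <;> nlinarith
  calc |t - smoothClamp L δ t|
      = |ramp δ (L - t) * ((1 - ramp δ t) * t) - (1 - ramp δ (L - t)) * (L - t)| := by
        congr 1; unfold smoothClamp; ring
    _ ≤ 3 * δ := abs_sub_le_of_nonneg_of_le hlow.1 hlow.2 hhigh.1 hhigh.2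

theorem exists_lipschitzWith_smoothClamp (hδ : 0 < δ) (hL : 4 * δ ≤ L) :
    ∃ K, LipschitzWith K (smoothClamp L δ) :=
  (contDiff_smoothClamp L δ).exists_lipschitzWith_of_const_off_Icc (by simp)
    (show δ ≤ L - δ by linarith)
    (fun t ht => by rw [smoothClamp_of_le hδ hL ht, smoothClamp_of_le hδ hL le_rfl])
    (fun t ht => by rw [smoothClamp_of_ge hδ ht, smoothClamp_of_ge hδ le_rfl])

theorem abs_sub_smoothClamp_le_of_abs_sub_le {s : ℝ} (hδ : 0 < δ) (hL : 4 * δ ≤ L)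
    (hs : s ∈ Icc 0 L) (hst : |s - t| ≤ δ) : |s - smoothClamp L δ t| ≤ 4 * δ := by
  have ht : t ∈ Icc (-δ) (L + δ) := by
    obtain ⟨h₁, h₂⟩ := abs_le.1 hst
    constructor <;> linarith [hs.1, hs.2]
  calc |s - smoothClamp L δ t| ≤ |s - t| + |t - smoothClamp L δ t| := abs_sub_le _ _ _
    _ ≤ δ + 3 * δ := add_le_add hst (abs_sub_smoothClamp_le hδ hL ht)
    _ = 4 * δ := by ring

end SmoothClamp

theorem approx_preserving_levels_general (X : Type*) [NormedAddCommGroup X] [NormedSpace ℝ X]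
    (p : ℕ∞) (C : ℝ)
    (H : ∀ g : X → ℝ, (∀ x y : X, |g x - g y| ≤ ‖x - y‖) →
      (∀ x, g x ∈ Set.Icc (0 : ℝ) 10) →
      ∃ φ : X → ℝ, ContDiff ℝ p φ ∧ (∀ x y : X, |φ x - φ y| ≤ C * ‖x - y‖) ∧
        ∀ x, |g x - φ x| ≤ 1 / 8) :
    ∃ C₀ : ℝ, 1 ≤ C₀ ∧
      ∀ g : X → ℝ, (∀ x y : X, |g x - g y| ≤ ‖x - y‖) →
        (∀ x, g x ∈ Set.Icc (0 : ℝ) 10) →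
        ∃ h : X → ℝ, ContDiff ℝ p h ∧ (∀ x y : X, |h x - h y| ≤ C₀ * ‖x - y‖) ∧
          (∀ x, h x ∈ Set.Icc (0 : ℝ) 10) ∧
          (∀ x, |g x - h x| ≤ 1 / 2) ∧
          (∀ x, g x = 0 → h x = 0) ∧
          (∀ x, g x = 10 → h x = 10) := by
  have hδ : (0 : ℝ) < 1 / 8 := by norm_num
  have hL : 4 * (1 / 8 : ℝ) ≤ 10 := by norm_num
  obtain ⟨K, hK⟩ := exists_lipschitzWith_smoothClamp hδ hL
  refine ⟨max 1 (K * C), le_max_left _ _, fun g hg_lip hg_mem => ?_⟩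
  obtain ⟨φ, hφ_smooth, hφ_lip, hφ_approx⟩ := H g hg_lip hg_mem
  refine ⟨smoothClamp 10 (1 / 8) ∘ φ,
    ((contDiff_smoothClamp 10 (1 / 8)).of_le (by exact_mod_cast le_top)).comp hφ_smooth,
    fun x y => ?_, fun x => smoothClamp_mem_Icc hδ (by norm_num) _, fun x => ?_,
    fun x hx => smoothClamp_of_le hδ hL ?_, fun x hx => smoothClamp_of_ge hδ ?_⟩
  · calc |smoothClamp 10 (1 / 8) (φ x) - smoothClamp 10 (1 / 8) (φ y)|
        ≤ K * |φ x - φ y| := by simpa only [Real.dist_eq] using hK.dist_le_mul (φ x) (φ y)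
      _ ≤ K * (C * ‖x - y‖) := by gcongr; exact hφ_lip x y
      _ ≤ max 1 (K * C) * ‖x - y‖ := by rw [← mul_assoc]; gcongr; exact le_max_right _ _
  · exact (abs_sub_smoothClamp_le_of_abs_sub_le hδ hL (hg_mem x) (hφ_approx x)).trans_eq
      (by norm_num)
  · linarith [(abs_le.1 (hφ_approx x)).1]
  · linarith [(abs_le.1 (hφ_approx x)).2]

/-- If on a Banach space `X` every `1`-Lipschitz `g : X → [0,10]` admits a `C^p` smooth,
`C`-Lipschitz `1/8`-approximation, then there is `C₀ ≥ 1` such that every such `g`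
admits a `C^p` smooth, `C₀`-Lipschitz `1/2`-approximation `h : X → [0,10]` which
vanishes where `g` vanishes and equals `10` where `g` equals `10`. -/
theorem approx_preserving_levels (X : Type*) [NormedAddCommGroup X] [NormedSpace ℝ X]
    [CompleteSpace X] (p : ℕ∞) (hp : 1 ≤ p) (C : ℝ) (hC : 1 ≤ C)
    (H : ∀ g : X → ℝ, (∀ x y : X, |g x - g y| ≤ ‖x - y‖) →
      (∀ x, g x ∈ Set.Icc (0 : ℝ) 10) →
      ∃ φ : X → ℝ, ContDiff ℝ p φ ∧ (∀ x y : X, |φ x - φ y| ≤ C * ‖x - y‖) ∧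
        ∀ x, |g x - φ x| ≤ 1 / 8) :
    ∃ C₀ : ℝ, 1 ≤ C₀ ∧
      ∀ g : X → ℝ, (∀ x y : X, |g x - g y| ≤ ‖x - y‖) →
        (∀ x, g x ∈ Set.Icc (0 : ℝ) 10) →
        ∃ h : X → ℝ, ContDiff ℝ p h ∧ (∀ x y : X, |h x - h y| ≤ C₀ * ‖x - y‖) ∧
          (∀ x, h x ∈ Set.Icc (0 : ℝ) 10) ∧
          (∀ x, |g x - h x| ≤ 1 / 2) ∧
          (∀ x, g x = 0 → h x = 0) ∧
          (∀ x, g x = 10 → h x = 10) :=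
  approx_preserving_levels_general X p C H
end

section
/- Let X be a Banach space, p ∈ ℕ≥1 ∪ {∞}, and C₀ ≥ 1. Assume that every 1-Lipschitz function g : X → [0, 10] admits a C^p smooth, C₀-Lipschitz function h : X → [0, 10] with |g(x) − h(x)| ≤ 1/2 for all x ∈ X, such that h(x) = 0 whenever g(x) = 0 and h(x) = 10 whenever g(x) = 10. Then every 1-Lipschitz function g : X → [0, ∞) admits a C^p smooth, C₀-Lipschitz function h : X → [0, ∞) with |g(x) − h(x)| ≤ 1 for all x ∈ X and h(x) = 0 whenever g(x) = 0. -/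
/-!
Cut `g` into the layers `min (max (g - 10 n) 0) 10`, which are `1`-Lipschitz, take values in
`[0, 10]` and add up to `g`, and approximate each layer by a smooth `f n` as in the hypothesis.
Because `f n` keeps the levels `0` and `10`, at any given point every layer except the one
through that point is reproduced exactly, and there `f n` attains its minimum or its maximum.
So `∑ n, f n` (near any point a finite sum, as `f n` vanishes where `g ≤ 10 n`) differs from `g`
by the error of a single layer, and its derivative is that of a single `f n`; the mean value
inequality makes it `C₀`-Lipschitz.
-/

open Set Finset Filter Topology
open scoped NNReal

noncomputable def layer (a : ℝ) (n : ℕ) (t : ℝ) : ℝ := min (max (t - a * n) 0) a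

section Layer

variable {a t : ℝ} {n : ℕ}

lemma layer_mem_Icc (ha : 0 ≤ a) : layer a n t ∈ Icc 0 a :=
  ⟨le_min (le_max_right _ _) ha, min_le_right _ _⟩

lemma lipschitzWith_layer : LipschitzWith 1 (layer a n) := by
  have : LipschitzWith 1 fun t : ℝ => t - a * n := by
    simpa using LipschitzWith.id.sub (LipschitzWith.const (a * n))
  exact (this.max_const 0).min_const a

lemma layer_eq_zero (ha : 0 ≤ a) (h : t ≤ a * n) : layer a n t = 0 := by
  rw [layer, max_eq_right (by linarith), min_eq_left ha]

lemma layer_eq_width (h : a * (n + 1) ≤ t) : layer a n t = a := by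
  rw [layer, min_eq_right (by simp only [le_max_iff]; left; linarith)]

lemma layer_eq_min_sub_min (ha : 0 ≤ a) :
    layer a n t = min t (a * ↑(n + 1)) - min t (a * n) := by
  have : 0 ≤ a * n := by positivity
  simp only [layer, Nat.cast_succ, mul_add_one, min_def, max_def]
  split_ifs <;> linarith

lemma sum_range_layer (ha : 0 ≤ a) (ht : 0 ≤ t) (K : ℕ) :
    ∑ n ∈ range K, layer a n t = min t (a * K) := by
  simp_rw [layer_eq_min_sub_min ha]
  rw [sum_range_sub (fun n : ℕ => min t (a * n))]
  simp [ht]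

lemma lt_mul_floor_div_add_one (ha : 0 < a) : t < a * ↑(⌊t / a⌋₊ + 1) := by
  rw [mul_comm, ← div_lt_iff₀ ha]
  exact_mod_cast Nat.lt_floor_add_one (t / a)

lemma le_or_le_of_ne_floor (ha : 0 < a) (ht : 0 ≤ t) (hn : n ≠ ⌊t / a⌋₊) :
    t ≤ a * n ∨ a * (n + 1) ≤ t := by
  rcases hn.lt_or_gt with h | h
  · right
    have := (Nat.le_floor_iff (div_nonneg ht ha.le)).1 h
    push_cast at this
    rwa [le_div_iff₀ ha, mul_comm] at this
  · left
    have := (Nat.floor_lt (div_nonneg ht ha.le)).1 h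
    rw [div_lt_iff₀ ha, mul_comm] at this
    exact this.le

lemma layer_eq_zero_or_eq_width_of_ne_floor (ha : 0 < a) (ht : 0 ≤ t) (hn : n ≠ ⌊t / a⌋₊) :
    layer a n t = 0 ∨ layer a n t = a :=
  (le_or_le_of_ne_floor ha ht hn).imp (layer_eq_zero ha.le) layer_eq_width

end Layer

lemma norm_sum_le_of_eq_zero_of_ne {ι E : Type*} [SeminormedAddCommGroup E] (s : Finset ι)
    {v : ι → E} (i₀ : ι) {C : ℝ} (hC : 0 ≤ C) (hv : ∀ i ≠ i₀, v i = 0) (hv₀ : ‖v i₀‖ ≤ C) :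
    ‖∑ i ∈ s, v i‖ ≤ C := by
  by_cases hi₀ : i₀ ∈ s
  · rwa [sum_eq_single_of_mem i₀ hi₀ fun i _ hi => hv i hi]
  · rwa [sum_eq_zero fun i hi => hv i (ne_of_mem_of_not_mem hi hi₀), norm_zero]

lemma lipschitzWith_iff_abs_sub_le {X : Type*} [SeminormedAddCommGroup X] {K : ℝ≥0}
    {f : X → ℝ} : LipschitzWith K f ↔ ∀ x y, |f x - f y| ≤ K * ‖x - y‖ := by
  simp only [lipschitzWith_iff_dist_le_mul, dist_eq_norm, Real.norm_eq_abs]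

noncomputable def layerStack {X : Type*} (a : ℝ) (g : X → ℝ) (f : ℕ → X → ℝ) (x : X) : ℝ :=
  ∑ n ∈ range (⌊g x / a⌋₊ + 1), f n x

section LayerStack

variable {X : Type*} {a : ℝ} {g : X → ℝ} {f : ℕ → X → ℝ} {x : X}

lemma eq_layer_of_ne_floor (ha : 0 < a) (hg : 0 ≤ g x)
    (hf_bot : ∀ n x, layer a n (g x) = 0 → f n x = 0)
    (hf_top : ∀ n x, layer a n (g x) = a → f n x = a) {n : ℕ} (hn : n ≠ ⌊g x / a⌋₊) :
    f n x = layer a n (g x) := by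
  rcases layer_eq_zero_or_eq_width_of_ne_floor ha hg hn with h | h <;> rw [h]
  exacts [hf_bot n x h, hf_top n x h]

lemma fderiv_eq_zero_of_ne_floor [NormedAddCommGroup X] [NormedSpace ℝ X] (ha : 0 < a)
    (hg : 0 ≤ g x) (hf_mem : ∀ n x, f n x ∈ Icc 0 a)
    (hf_bot : ∀ n x, layer a n (g x) = 0 → f n x = 0)
    (hf_top : ∀ n x, layer a n (g x) = a → f n x = a) {n : ℕ} (hn : n ≠ ⌊g x / a⌋₊) :
    fderiv ℝ (f n) x = 0 := by
  rcases layer_eq_zero_or_eq_width_of_ne_floor ha hg hn with h | h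
  · refine IsLocalMin.fderiv_eq_zero (Eventually.of_forall fun y => ?_)
    rw [hf_bot n x h]
    exact (hf_mem n y).1
  · refine IsLocalMax.fderiv_eq_zero (Eventually.of_forall fun y => ?_)
    rw [hf_top n x h]
    exact (hf_mem n y).2

lemma sum_range_eq_of_le (ha : 0 ≤ a) (hf_bot : ∀ n x, layer a n (g x) = 0 → f n x = 0)
    {K K' : ℕ} (hx : g x ≤ a * K) (hK : K ≤ K') :
    ∑ n ∈ range K', f n x = ∑ n ∈ range K, f n x := by
  rw [← sum_range_add_sum_Ico _ hK, add_eq_left]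
  refine sum_eq_zero fun n hn => hf_bot n x (layer_eq_zero ha (hx.trans ?_))
  gcongr
  exact (mem_Ico.1 hn).1

lemma layerStack_eq_sum_range (ha : 0 < a) (hf_bot : ∀ n x, layer a n (g x) = 0 → f n x = 0)
    {K : ℕ} (hx : g x ≤ a * K) : layerStack a g f x = ∑ n ∈ range K, f n x := by
  rcases le_total K (⌊g x / a⌋₊ + 1) with hK | hK
  · exact sum_range_eq_of_le ha.le hf_bot hx hK
  · exact (sum_range_eq_of_le ha.le hf_bot (lt_mul_floor_div_add_one ha).le hK).symm

lemma contDiff_layerStack [NormedAddCommGroup X] [NormedSpace ℝ X] {p : WithTop ℕ∞}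
    (ha : 0 < a) (hg : Continuous g) (hf : ∀ n, ContDiff ℝ p (f n))
    (hf_bot : ∀ n x, layer a n (g x) = 0 → f n x = 0) :
    ContDiff ℝ p (layerStack a g f) := by
  refine contDiff_iff_contDiffAt.2 fun x => ?_
  have hx : {y | g y < a * ↑(⌊g x / a⌋₊ + 1)} ∈ 𝓝 x :=
    (isOpen_lt hg continuous_const).mem_nhds (lt_mul_floor_div_add_one ha)
  exact (ContDiff.sum fun n _ => hf n).contDiffAt.congr_of_eventuallyEq
    (eventually_of_mem hx fun y hy => layerStack_eq_sum_range ha hf_bot hy.le)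

lemma lipschitzWith_sum_range [NormedAddCommGroup X] [NormedSpace ℝ X] {p : WithTop ℕ∞}
    {C : ℝ≥0} (hp : 1 ≤ p) (ha : 0 < a) (hg : ∀ x, 0 ≤ g x) (hf : ∀ n, ContDiff ℝ p (f n))
    (hf_lip : ∀ n, LipschitzWith C (f n)) (hf_mem : ∀ n x, f n x ∈ Icc 0 a)
    (hf_bot : ∀ n x, layer a n (g x) = 0 → f n x = 0)
    (hf_top : ∀ n x, layer a n (g x) = a → f n x = a) (K : ℕ) :
    LipschitzWith C fun x => ∑ n ∈ range K, f n x := by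
  have hf_diff n : Differentiable ℝ (f n) :=
    (hf n).differentiable (zero_lt_one.trans_le hp).ne'
  refine lipschitzWith_of_nnnorm_fderiv_le (Differentiable.fun_sum fun n _ => hf_diff n)
    fun z => ?_
  rw [← NNReal.coe_le_coe, coe_nnnorm, fderiv_fun_sum fun n _ => (hf_diff n).differentiableAt]
  exact norm_sum_le_of_eq_zero_of_ne _ ⌊g z / a⌋₊ C.coe_nonneg
    (fun n hn => fderiv_eq_zero_of_ne_floor ha (hg z) hf_mem hf_bot hf_top hn)
    (norm_fderiv_le_of_lipschitz ℝ (hf_lip _))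

lemma lipschitzWith_layerStack [NormedAddCommGroup X] [NormedSpace ℝ X] {p : WithTop ℕ∞}
    {C : ℝ≥0} (hp : 1 ≤ p) (ha : 0 < a) (hg : ∀ x, 0 ≤ g x) (hf : ∀ n, ContDiff ℝ p (f n))
    (hf_lip : ∀ n, LipschitzWith C (f n)) (hf_mem : ∀ n x, f n x ∈ Icc 0 a)
    (hf_bot : ∀ n x, layer a n (g x) = 0 → f n x = 0)
    (hf_top : ∀ n x, layer a n (g x) = a → f n x = a) :
    LipschitzWith C (layerStack a g f) := by
  refine LipschitzWith.of_dist_le_mul fun x y => ?_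
  set K := max (⌊g x / a⌋₊ + 1) (⌊g y / a⌋₊ + 1)
  have hK {z : X} (hz : ⌊g z / a⌋₊ + 1 ≤ K) : layerStack a g f z = ∑ n ∈ range K, f n z :=
    layerStack_eq_sum_range ha hf_bot
      ((lt_mul_floor_div_add_one ha).le.trans (by gcongr))
  rw [hK (le_max_left _ _), hK (le_max_right _ _)]
  exact (lipschitzWith_sum_range hp ha hg hf hf_lip hf_mem hf_bot hf_top K).dist_le_mul x y

lemma abs_sub_layerStack_le {ε : ℝ} (ha : 0 < a) (hg : 0 ≤ g x)
    (hf_approx : ∀ n x, |layer a n (g x) - f n x| ≤ ε)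
    (hf_bot : ∀ n x, layer a n (g x) = 0 → f n x = 0)
    (hf_top : ∀ n x, layer a n (g x) = a → f n x = a) :
    |g x - layerStack a g f x| ≤ ε := by
  have hg_sum : g x = ∑ n ∈ range (⌊g x / a⌋₊ + 1), layer a n (g x) := by
    rw [sum_range_layer ha.le hg, min_eq_left (lt_mul_floor_div_add_one ha).le]
  have h_diff : g x - layerStack a g f x =
      ∑ n ∈ range (⌊g x / a⌋₊ + 1), (layer a n (g x) - f n x) := by
    rw [sum_sub_distrib, ← hg_sum, layerStack]
  rw [h_diff, ← Real.norm_eq_abs]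
  exact norm_sum_le_of_eq_zero_of_ne _ ⌊g x / a⌋₊ ((abs_nonneg _).trans (hf_approx 0 x))
    (fun n hn => sub_eq_zero.2 (eq_layer_of_ne_floor ha hg hf_bot hf_top hn).symm)
    (hf_approx _ x)

lemma layerStack_nonneg (hf_nonneg : ∀ n x, 0 ≤ f n x) : 0 ≤ layerStack a g f x :=
  sum_nonneg fun n _ => hf_nonneg n x

lemma layerStack_eq_zero (ha : 0 < a) (hf_bot : ∀ n x, layer a n (g x) = 0 → f n x = 0)
    (hx : g x = 0) : layerStack a g f x = 0 := by
  rw [layerStack_eq_sum_range ha hf_bot (K := 0) (by simp [hx]), sum_range_zero]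

end LayerStack

theorem approx_unbounded_above_general (X : Type*) [NormedAddCommGroup X] [NormedSpace ℝ X]
    (p : ℕ∞) (hp : 1 ≤ p) (C₀ : ℝ) (hC₀ : 1 ≤ C₀)
    (H : ∀ g : X → ℝ, (∀ x y : X, |g x - g y| ≤ ‖x - y‖) →
      (∀ x, g x ∈ Set.Icc (0 : ℝ) 10) →
      ∃ h : X → ℝ, ContDiff ℝ p h ∧ (∀ x y : X, |h x - h y| ≤ C₀ * ‖x - y‖) ∧
        (∀ x, h x ∈ Set.Icc (0 : ℝ) 10) ∧
        (∀ x, |g x - h x| ≤ 1 / 2) ∧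
        (∀ x, g x = 0 → h x = 0) ∧
        (∀ x, g x = 10 → h x = 10)) :
    ∀ g : X → ℝ, (∀ x y : X, |g x - g y| ≤ ‖x - y‖) → (∀ x, 0 ≤ g x) →
      ∃ h : X → ℝ, ContDiff ℝ p h ∧ (∀ x y : X, |h x - h y| ≤ C₀ * ‖x - y‖) ∧
        (∀ x, 0 ≤ h x) ∧
        (∀ x, |g x - h x| ≤ 1) ∧
        (∀ x, g x = 0 → h x = 0) := by
  intro g hg hg_nonneg
  lift C₀ to ℝ≥0 using zero_le_one.trans hC₀
  have hg_lip : LipschitzWith 1 g := lipschitzWith_iff_abs_sub_le.2 (by simpa using hg)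
  have hp' : (1 : WithTop ℕ∞) ≤ p := by exact_mod_cast hp
  have ha : (0 : ℝ) < 10 := by norm_num
  choose f hf hf_lip hf_mem hf_approx hf_bot hf_top using fun n : ℕ =>
    H (fun x => layer 10 n (g x))
      (by simpa using lipschitzWith_iff_abs_sub_le.1 (lipschitzWith_layer.comp hg_lip))
      (fun x => layer_mem_Icc ha.le)
  have hf_lip' n : LipschitzWith C₀ (f n) := lipschitzWith_iff_abs_sub_le.2 (hf_lip n)
  refine ⟨layerStack 10 g f, contDiff_layerStack ha hg_lip.continuous hf hf_bot,
    lipschitzWith_iff_abs_sub_le.1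
      (lipschitzWith_layerStack hp' ha hg_nonneg hf hf_lip' hf_mem hf_bot hf_top),
    fun x => layerStack_nonneg fun n x => (hf_mem n x).1,
    fun x => (abs_sub_layerStack_le ha (hg_nonneg x) hf_approx hf_bot hf_top).trans (by norm_num),
    fun x => layerStack_eq_zero ha hf_bot⟩

/-- If on a Banach space `X` every `1`-Lipschitz `g : X → [0,10]` admits a `C^p` smooth,
`C₀`-Lipschitz `1/2`-approximation into `[0,10]` preserving the level sets `{g = 0}` and
`{g = 10}`, then every `1`-Lipschitz `g : X → [0,∞)` admits a `C^p` smooth,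
`C₀`-Lipschitz `1`-approximation `h : X → [0,∞)` vanishing where `g` vanishes. -/
theorem approx_unbounded_above (X : Type*) [NormedAddCommGroup X] [NormedSpace ℝ X]
    [CompleteSpace X] (p : ℕ∞) (hp : 1 ≤ p) (C₀ : ℝ) (hC₀ : 1 ≤ C₀)
    (H : ∀ g : X → ℝ, (∀ x y : X, |g x - g y| ≤ ‖x - y‖) →
      (∀ x, g x ∈ Set.Icc (0 : ℝ) 10) →
      ∃ h : X → ℝ, ContDiff ℝ p h ∧ (∀ x y : X, |h x - h y| ≤ C₀ * ‖x - y‖) ∧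
        (∀ x, h x ∈ Set.Icc (0 : ℝ) 10) ∧
        (∀ x, |g x - h x| ≤ 1 / 2) ∧
        (∀ x, g x = 0 → h x = 0) ∧
        (∀ x, g x = 10 → h x = 10)) :
    ∀ g : X → ℝ, (∀ x y : X, |g x - g y| ≤ ‖x - y‖) → (∀ x, 0 ≤ g x) →
      ∃ h : X → ℝ, ContDiff ℝ p h ∧ (∀ x y : X, |h x - h y| ≤ C₀ * ‖x - y‖) ∧
        (∀ x, 0 ≤ h x) ∧
        (∀ x, |g x - h x| ≤ 1) ∧
        (∀ x, g x = 0 → h x = 0) :=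
  approx_unbounded_above_general X p hp C₀ hC₀ H
end

section
/- Let X be a Banach space, p ∈ ℕ≥1 ∪ {∞}, and C₀ ≥ 1. Assume that every 1-Lipschitz function g : X → [0, ∞) admits a C^p smooth, C₀-Lipschitz function h : X → [0, ∞) with |g(x) − h(x)| ≤ 1 for all x ∈ X and with h(x) = 0 whenever g(x) = 0. Then every 1-Lipschitz function g : X → ℝ admits a C^p smooth, C₀-Lipschitz function h : X → ℝ with |g(x) − h(x)| ≤ 1 for all x ∈ X; namely one may take h = h⁺ − h⁻ where h⁺, h⁻ are obtained by applying the hypothesis to the positive part g⁺ and the negative part g⁻ of g. -/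
/-- If on a Banach space `X` every `1`-Lipschitz `g : X → [0,∞)` admits a `C^p` smooth,
`C₀`-Lipschitz `1`-approximation `h : X → [0,∞)` vanishing where `g` vanishes, then
every `1`-Lipschitz `g : X → ℝ` admits a `C^p` smooth, `C₀`-Lipschitz
`1`-approximation. -/
theorem approx_real_valued (X : Type*) [NormedAddCommGroup X] [NormedSpace ℝ X]
    [CompleteSpace X] (p : ℕ∞) (hp : 1 ≤ p) (C₀ : ℝ) (hC₀ : 1 ≤ C₀)
    (H : ∀ g : X → ℝ, (∀ x y : X, |g x - g y| ≤ ‖x - y‖) → (∀ x, 0 ≤ g x) →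
      ∃ h : X → ℝ, ContDiff ℝ p h ∧ (∀ x y : X, |h x - h y| ≤ C₀ * ‖x - y‖) ∧
        (∀ x, 0 ≤ h x) ∧
        (∀ x, |g x - h x| ≤ 1) ∧
        (∀ x, g x = 0 → h x = 0)) :
    ∀ g : X → ℝ, (∀ x y : X, |g x - g y| ≤ ‖x - y‖) →
      ∃ h : X → ℝ, ContDiff ℝ p h ∧ (∀ x y : X, |h x - h y| ≤ C₀ * ‖x - y‖) ∧
        ∀ x, |g x - h x| ≤ 1 := by
  intro g hg
  -- positive and negative parts
  have hgp : ∀ x y : X, |max (g x) 0 - max (g y) 0| ≤ ‖x - y‖ :=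
    fun x y => (abs_max_sub_max_le_abs _ _ _).trans (hg x y)
  have hgn : ∀ x y : X, |max (-g x) 0 - max (-g y) 0| ≤ ‖x - y‖ := by
    intro x y
    refine (abs_max_sub_max_le_abs _ _ _).trans ?_
    rw [show -g x - -g y = -(g x - g y) by ring, abs_neg]
    exact hg x y
  obtain ⟨h₁, h₁sm, h₁lip, h₁pos, h₁ap, h₁z⟩ :=
    H (fun x => max (g x) 0) hgp (fun x => le_max_right _ _)
  obtain ⟨h₂, h₂sm, h₂lip, h₂pos, h₂ap, h₂z⟩ :=
    H (fun x => max (-g x) 0) hgn (fun x => le_max_right _ _)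
  -- vanishing facts
  have h₁zero : ∀ x, g x ≤ 0 → h₁ x = 0 := fun x hx => h₁z x (max_eq_right hx)
  have h₂zero : ∀ x, 0 ≤ g x → h₂ x = 0 := fun x hx => h₂z x (max_eq_right (neg_nonpos.2 hx))
  -- continuity of g
  have gcont : Continuous g := by
    have : LipschitzWith 1 g := by
      refine LipschitzWith.of_dist_le_mul fun x y => ?_
      rw [Real.dist_eq, dist_eq_norm]
      simpa using hg x y
    exact this.continuous
  refine ⟨fun x => h₁ x - h₂ x, h₁sm.sub h₂sm, ?_, ?_⟩
  · -- Lipschitz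
    -- key: mixed sign case
    have key : ∀ x y : X, 0 ≤ g x → g y ≤ 0 →
        |h₁ x - h₂ x - (h₁ y - h₂ y)| ≤ C₀ * ‖x - y‖ := by
      intro x y hx hy
      -- find z on segment with g z = 0
      set φ : ℝ → X := fun t => x + t • (y - x) with hφ
      have φcont : Continuous φ := by continuity
      have : (0 : ℝ) ∈ Set.Icc (g (φ 1)) (g (φ 0)) := by
        constructor <;> simp [hφ, hx, hy]
      obtain ⟨t, ht, hgz⟩ := intermediate_value_Icc' (by norm_num : (0:ℝ) ≤ 1)
        (gcont.comp φcont).continuousOn this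
      set z := φ t with hz
      have hz1 : h₁ z = 0 := h₁zero z (le_of_eq hgz)
      have hz2 : h₂ z = 0 := h₂zero z (ge_of_eq hgz)
      have hxz : ‖x - z‖ = t * ‖x - y‖ := by
        have : x - z = t • (x - y) := by
          simp only [hz, hφ]
          module
        rw [this, norm_smul, Real.norm_eq_abs, abs_of_nonneg ht.1]
      have hzy : ‖z - y‖ = (1 - t) * ‖x - y‖ := by
        have : z - y = (1 - t) • (x - y) := by
          simp only [hz, hφ]
          module
        rw [this, norm_smul, Real.norm_eq_abs, abs_of_nonneg (by linarith [ht.2])]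
      have e1 : h₁ x ≤ C₀ * ‖x - z‖ := by
        have := h₁lip x z
        rw [hz1, sub_zero, abs_of_nonneg (h₁pos x)] at this
        exact this
      have e2 : h₂ y ≤ C₀ * ‖z - y‖ := by
        have := h₂lip z y
        rw [hz2, abs_sub_comm, sub_zero, abs_of_nonneg (h₂pos y)] at this
        exact this
      have h2x : h₂ x = 0 := h₂zero x hx
      have h1y : h₁ y = 0 := h₁zero y hy
      rw [h2x, h1y]
      have : |h₁ x - 0 - (0 - h₂ y)| = h₁ x + h₂ y := by
        rw [abs_of_nonneg] <;> [ring_nf; skip]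
        have := h₁pos x; have := h₂pos y; linarith
      rw [this]
      calc h₁ x + h₂ y ≤ C₀ * ‖x - z‖ + C₀ * ‖z - y‖ := by linarith
        _ = C₀ * (t * ‖x - y‖ + (1 - t) * ‖x - y‖) := by rw [hxz, hzy]; ring
        _ = C₀ * ‖x - y‖ := by ring
    intro x y
    show |h₁ x - h₂ x - (h₁ y - h₂ y)| ≤ C₀ * ‖x - y‖
    rcases le_or_gt 0 (g x) with hx | hx
    · rcases le_or_gt 0 (g y) with hy | hy
      · rw [h₂zero x hx, h₂zero y hy, sub_zero, sub_zero]
        exact h₁lip x y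
      · exact key x y hx hy.le
    · rcases le_or_gt 0 (g y) with hy | hy
      · rw [abs_sub_comm, norm_sub_rev x y]
        exact key y x hy hx.le
      · rw [h₁zero x hx.le, h₁zero y hy.le, zero_sub, zero_sub,
          show -h₂ x - -h₂ y = -(h₂ x - h₂ y) by ring, abs_neg]
        exact h₂lip x y
  · -- approximation
    intro x
    show |g x - (h₁ x - h₂ x)| ≤ 1
    rcases le_or_gt 0 (g x) with hx | hx
    · have := h₁ap x
      rw [h₂zero x hx, sub_zero]
      simpa [max_eq_left hx] using this
    · have := h₂ap x
      rw [h₁zero x hx.le, zero_sub, sub_neg_eq_add]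
      rw [max_eq_left (neg_nonneg.2 hx.le)] at this
      rw [show g x + h₂ x = -(-g x - h₂ x) by ring, abs_neg]
      exact this
end
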